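/- Assume 2g − 2 + n > 0. The poset C_{g,n} of pairs (G,P) with G a stable graph of genus g with n legs and P ∈ C_G is connected, and the forgetful map C_{g,n} → S_{g,n}, (G,P) ↦ G, is a quotient of posets. -/

import Mathlib

/-!
Common combinatorial preliminaries: weighted graphs with legs, contractions,
spin structures, following Caporaso–Melo–Pacini, "Tropicalizing the moduli
space of spin curves".
-/

attribute [local instance] Classical.propDecidable

noncomputable section

/-- A weighted graph with legs.  Edges are recorded as elements of a finite
type `E` together with their (unordered) pair of endpoints `ends e : Sym2 V`
(a loop corresponds to a diagonal pair); legs are elements of a finite type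
`Lg` with an endpoint map `legEnd`; `w` is the weight function. -/
structure WLGraph : Type 1 where
  V : Type
  E : Type
  Lg : Type
  fV : Fintype V
  fE : Fintype E
  fL : Fintype Lg
  dV : DecidableEq V
  dE : DecidableEq E
  dL : DecidableEq Lg
  neV : Nonempty V
  ends : E → Sym2 V
  legEnd : Lg → V
  w : V → ℕ

attribute [instance] WLGraph.fV WLGraph.fE WLGraph.fL WLGraph.dV WLGraph.dE WLGraph.dL WLGraph.neV

namespace WLGraph

variable (G : WLGraph)

/-- The multiplicity of the vertex `v` in the edge `e` (`2` for a loop at `v`). -/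
def degMul (v : G.V) (e : G.E) : ℕ :=
  Sym2.lift ⟨fun a b => (if a = v then 1 else 0) + (if b = v then 1 else 0),
    fun _ _ => add_comm _ _⟩ (G.ends e)

/-- The degree of a vertex: number of non-leg half-edges ending at it. -/
def deg (v : G.V) : ℕ := ∑ e, G.degMul v e

/-- The number of legs ending at a vertex. -/
def legsAt (v : G.V) : ℕ := (Finset.univ.filter fun l => G.legEnd l = v).card

/-- The number of loops based at a vertex. -/
def loops (v : G.V) : ℕ := (Finset.univ.filter fun e => G.ends e = Sym2.diag v).card

/-- The boundary map `∂ : E_G → V_G` over `F₂`, sending an edge to the sum of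
its two endpoints. -/
def boundary : (G.E → ZMod 2) →ₗ[ZMod 2] (G.V → ZMod 2) where
  toFun x := fun v => ∑ e, x e * (G.degMul v e : ZMod 2)
  map_add' x y := by
    funext v
    simp [add_mul, Finset.sum_add_distrib]
  map_smul' c x := by
    funext v
    simp [Finset.mul_sum, mul_assoc]

/-- The `F₂`-indicator vector of a set of edges. -/
def indicator (P : Finset G.E) : G.E → ZMod 2 := fun e => if e ∈ P then 1 else 0

/-- A subset of edges is cyclic if it lies in the cycle space `C_G = ker ∂`,
i.e. its indicator vector is killed by the boundary map. -/
def IsCyclic (P : Finset G.E) : Prop := G.boundary (G.indicator P) = 0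

/-- Adjacency through an edge belonging to `P`. -/
def PAdj (P : Finset G.E) (u v : G.V) : Prop :=
  ∃ e ∈ P, u ∈ G.ends e ∧ v ∈ G.ends e

/-- The vertex set of the contraction `G/P`: connected components of `(V, P)`. -/
def CompV (P : Finset G.E) : Type := Quot (G.PAdj P)

instance (P : Finset G.E) : Finite (G.CompV P) := Quot.finite _
instance (P : Finset G.E) : Fintype (G.CompV P) := Fintype.ofFinite _
instance (P : Finset G.E) : Nonempty (G.CompV P) := G.neV.map (Quot.mk _)

/-- The set of vertices of `G` lying in a given component. -/
def fiberV (P : Finset G.E) (x : G.CompV P) : Finset G.V :=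
  Finset.univ.filter fun v => Quot.mk (G.PAdj P) v = x

/-- The set of edges of `P` lying in a given component. -/
def fiberE (P : Finset G.E) (x : G.CompV P) : Finset G.E :=
  P.filter fun e => ∀ v ∈ G.ends e, Quot.mk (G.PAdj P) v = x

/-- The weight of a vertex `x` of `G/P`: the genus of its preimage, i.e. the
sum of the weights of the vertices in the component plus its first Betti
number `#edges - #vertices + 1`. -/
def quotWeight (P : Finset G.E) (x : G.CompV P) : ℕ :=
  (∑ v ∈ G.fiberV P x, G.w v) + ((G.fiberE P x).card + 1 - (G.fiberV P x).card)

/-- Connectedness of the graph. -/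
def Connected : Prop := ∀ u v : G.V, Relation.EqvGen (G.PAdj Finset.univ) u v

/-- The number of connected components `c(G)`. -/
def numComp : ℕ := Nat.card (G.CompV Finset.univ)

/-- The first Betti number `b₁(G) = |E| - |V| + c(G)`. -/
def b1 : ℕ := Fintype.card G.E + G.numComp - Fintype.card G.V

/-- The genus `g(G) = Σ_v w(v) + b₁(G)`. -/
def genus : ℕ := (∑ v, G.w v) + G.b1

/-- The number of legs. -/
def numLegs : ℕ := Fintype.card G.Lg

/-- Stability: connected and `2w(v) - 2 + deg(v) + ℓ(v) > 0` at every vertex. -/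
def Stable : Prop :=
  G.Connected ∧ ∀ v : G.V, 2 < 2 * G.w v + G.deg v + G.legsAt v

/-- `G` is Eulerian (cyclic) if every vertex has even degree, i.e. the set of
all edges lies in the cycle space. -/
def Eulerian : Prop := G.IsCyclic Finset.univ

/-- A basic graph: a stable cyclic (Eulerian) graph of genus `≥ 2` with at
least one edge, all weights `≤ 1`, and `w(v) + deg(v) + ℓ(v) ≤ 4` at every
vertex with equality only if there is a loop at `v`. -/
def IsBasic : Prop :=
  G.Stable ∧ 2 ≤ G.genus ∧ Nonempty G.E ∧ G.Eulerian ∧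
  (∀ v, G.w v ≤ 1) ∧
  (∀ v, G.w v + G.deg v + G.legsAt v ≤ 4) ∧
  (∀ v, G.w v + G.deg v + G.legsAt v = 4 → 1 ≤ G.loops v)

/-- `c⁺`: the number of vertices of `G/P` of positive weight, i.e. the number
of connected components of `P̄` of positive genus. -/
def cPlus (P : Finset G.E) : ℕ :=
  (Finset.univ.filter fun x : G.CompV P => 0 < G.quotWeight P x).card

/-- The contracted graph `G/P`. -/
def contract (P : Finset G.E) : WLGraph where
  V := G.CompV P
  E := {e : G.E // e ∉ P}
  Lg := G.Lg
  fV := inferInstance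
  fE := inferInstance
  fL := G.fL
  dV := Classical.decEq _
  dE := inferInstance
  dL := G.dL
  neV := inferInstance
  ends := fun e => (G.ends e.1).map (Quot.mk (G.PAdj P))
  legEnd := fun l => Quot.mk (G.PAdj P) (G.legEnd l)
  w := G.quotWeight P

/-- An ordered pair of endpoints of an edge. -/
def endPair (e : G.E) : G.V × G.V := Classical.choose (Quot.exists_rep (G.ends e))

end WLGraph

/-- A spin structure on a graph `G`: a cyclic subset `P` of edges and a sign
function on the vertices of `G/P` vanishing at all vertices of weight `0`. -/
structure SpinStructure (G : WLGraph) where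
  P : Finset G.E
  cyclic : G.IsCyclic P
  s : G.CompV P → ZMod 2
  vanish : ∀ x, G.quotWeight P x = 0 → s x = 0

/-- The parity of a spin structure: the parity of `Σ_{v ∈ V(G/P)} s(v)`. -/
def SpinStructure.parity {G : WLGraph} (σ : SpinStructure G) : ZMod 2 := ∑ x, σ.s x

/-- A contraction of graphs `γ : G → G' = G/F`: the edges of `G'` are
identified with `E(G) ∖ F`, the legs of `G'` with those of `G`; the vertex
map is surjective, its fibers are exactly the connected components of
`(V(G), F)`, endpoints and legs are compatible, and the weight of a vertex of
`G'` is the genus of its preimage. -/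
structure Contraction (G G' : WLGraph) where
  F : Finset G.E
  vMap : G.V → G'.V
  eEquiv : G'.E ≃ {e : G.E // e ∉ F}
  lEquiv : G'.Lg ≃ G.Lg
  vSurj : Function.Surjective vMap
  ends_compat : ∀ e' : G'.E, G'.ends e' = (G.ends (eEquiv e').1).map vMap
  leg_compat : ∀ l' : G'.Lg, G'.legEnd l' = vMap (G.legEnd (lEquiv l'))
  collapse : ∀ e ∈ F, ∀ u ∈ G.ends e, ∀ v ∈ G.ends e, vMap u = vMap v
  fiber_conn : ∀ u v : G.V, vMap u = vMap v → Relation.EqvGen (G.PAdj F) u v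
  w_compat : ∀ v' : G'.V,
    G'.w v' = (∑ v ∈ Finset.univ.filter (fun v => vMap v = v'), G.w v)
      + (((F.filter fun e => ∀ u ∈ G.ends e, vMap u = v').card + 1)
          - (Finset.univ.filter fun v => vMap v = v').card)

namespace Contraction

variable {G G' : WLGraph} (γ : Contraction G G')

/-- The induced map `γ^E_* : E_G → E_{G'}` (γ^E_*(e) = e if e ∉ F, 0 else). -/
def eStar : (G.E → ZMod 2) →ₗ[ZMod 2] (G'.E → ZMod 2) where
  toFun x := fun e' => x (γ.eEquiv e').1
  map_add' _ _ := rfl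
  map_smul' _ _ := rfl

/-- The induced map `γ^V_* : V_G → V_{G'}`. -/
def vStar : (G.V → ZMod 2) →ₗ[ZMod 2] (G'.V → ZMod 2) where
  toFun x := fun v' => ∑ v ∈ Finset.univ.filter (fun v => γ.vMap v = v'), x v
  map_add' x y := by
    funext v'
    simp [Finset.sum_add_distrib]
  map_smul' c x := by
    funext v'
    simp [Finset.mul_sum]

/-- The pushforward `γ_* P = P ∖ F` of a set of edges, as a subset of `E(G')`. -/
def pushE (P : Finset G.E) : Finset G'.E :=
  Finset.univ.filter fun e' => (γ.eEquiv e' : {e : G.E // e ∉ γ.F}).1 ∈ P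

/-- The graph of the induced map `γ̄ : V(G/P) → V(G'/P')` on components. -/
def compMapsTo (P : Finset G.E) (P' : Finset G'.E)
    (x : G.CompV P) (x' : G'.CompV P') : Prop :=
  ∃ v : G.V, Quot.mk (G.PAdj P) v = x ∧ Quot.mk (G'.PAdj P') (γ.vMap v) = x'

/-- The pushforward sign function: `s'(v') = Σ_{v ∈ γ̄⁻¹(v')} s(v)`. -/
def pushS (P : Finset G.E) (s : G.CompV P → ZMod 2) :
    G'.CompV (γ.pushE P) → ZMod 2 :=
  fun x' => ∑ x ∈ Finset.univ.filter
    (fun x => γ.compMapsTo P (γ.pushE P) x x'), s x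

/-- `γ_* σ = σ'` for spin structures. -/
def SpinMapsTo (σ : SpinStructure G) (σ' : SpinStructure G') : Prop :=
  σ'.P = γ.pushE σ.P ∧ HEq σ'.s (γ.pushS σ.P σ.s)

end Contraction

/-- An automorphism of a graph: weight-preserving bijection on vertices,
bijection on edges compatible with endpoints, fixing every leg. -/
structure GraphAut (G : WLGraph) where
  vE : G.V ≃ G.V
  eE : G.E ≃ G.E
  ends_compat : ∀ e, G.ends (eE e) = (G.ends e).map vE
  w_compat : ∀ v, G.w (vE v) = G.w v
  leg_fix : ∀ l, G.legEnd l = vE (G.legEnd l)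

namespace GraphAut

variable {G : WLGraph}

/-- Composition of automorphisms (`α.comp β` acts by `β` first, then `α`). -/
def comp (α β : GraphAut G) : GraphAut G where
  vE := β.vE.trans α.vE
  eE := β.eE.trans α.eE
  ends_compat e := by
    simp only [Equiv.trans_apply, Equiv.coe_trans]
    rw [α.ends_compat, β.ends_compat, Sym2.map_map]
  w_compat v := by
    simp only [Equiv.trans_apply]
    rw [α.w_compat, β.w_compat]
  leg_fix l := by
    simp only [Equiv.trans_apply]
    rw [← β.leg_fix, ← α.leg_fix]

/-- `α_* σ = σ'` for an automorphism `α` and spin structures `σ, σ'`. -/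
def SpinMapsTo (α : GraphAut G) (σ σ' : SpinStructure G) : Prop :=
  σ'.P = σ.P.image α.eE ∧
  ∀ v : G.V, σ'.s (Quot.mk (G.PAdj σ'.P) (α.vE v)) = σ.s (Quot.mk (G.PAdj σ.P) v)

/-- `α` preserves the spin structure `σ`, i.e. `α_*(P,s) = (P,s)`. -/
def PreservesSpin (α : GraphAut G) (σ : SpinStructure G) : Prop :=
  α.SpinMapsTo σ σ

end GraphAut

/-- The graph `P̄ = G - R°` where `R = E ∖ P`: same vertices, edges `P`, and
the legs of `G` together with a pair of new legs for each edge of `R`, placed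
at its two endpoints. -/
def WLGraph.legify (G : WLGraph) (P : Finset G.E) : WLGraph where
  V := G.V
  E := {e : G.E // e ∈ P}
  Lg := G.Lg ⊕ ({e : G.E // e ∉ P} × Bool)
  fV := G.fV
  fE := inferInstance
  fL := inferInstance
  dV := G.dV
  dE := inferInstance
  dL := inferInstance
  neV := G.neV
  ends := fun e => G.ends e.1
  legEnd := fun l =>
    match l with
    | Sum.inl l => G.legEnd l
    | Sum.inr (e, b) => if b then (G.endPair e.1).1 else (G.endPair e.1).2
  w := G.w

/-- `G` is a stable graph of genus `g` with `n` legs. -/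
def StG (g n : ℕ) (G : WLGraph) : Prop := G.Stable ∧ G.genus = g ∧ G.numLegs = n

/-- Objects of the poset `C_{g,n}` before taking isomorphism classes. -/
def CycObj : Type 1 := Σ G : WLGraph, Finset G.E

/-- Objects of the poset `SP_{g,n}` before taking isomorphism classes. -/
def SpinObj : Type 1 := Σ G : WLGraph, SpinStructure G

/-- Order on graphs: `G ≥ G'` iff there is a contraction `G → G'`. -/
def GraphGe (G G' : WLGraph) : Prop := Nonempty (Contraction G G')

/-- Order on `C_{g,n}`: `(G,P) ≥ (G',P')` iff some contraction pushes `P` to `P'`. -/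
def CycGe (a b : CycObj) : Prop := ∃ γ : Contraction a.1 b.1, γ.pushE a.2 = b.2

/-- Order on `SP_{g,n}`: `(G,P,s) ≥ (G',P',s')` iff some contraction pushes
`(P,s)` to `(P',s')`. -/
def SpinGe (a b : SpinObj) : Prop := ∃ γ : Contraction a.1 b.1, γ.SpinMapsTo a.2 b.2

/-- `q : X → Y` is a quotient of posets (for the `≥`-relations `geA`, `geB`):
it is surjective, order-preserving, and any relation downstairs lifts. -/
def IsPosetQuotient {α : Sort*} {β : Sort*}
    (geA : α → α → Prop) (geB : β → β → Prop) (q : α → β) : Prop :=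
  Function.Surjective q ∧
  (∀ a a', geA a a' → geB (q a) (q a')) ∧
  (∀ b b', geB b b' → ∃ a a', q a = b ∧ q a' = b' ∧ geA a a')

/-- Strict order `x > y` associated to a `≥`-relation. -/
def StrictGt {α : Sort*} (ge : α → α → Prop) (x y : α) : Prop := ge x y ∧ ¬ ge y x

/-- `x` covers `y`. -/
def Covers {α : Sort*} (ge : α → α → Prop) (x y : α) : Prop :=
  StrictGt ge x y ∧ ¬ ∃ z, StrictGt ge x z ∧ StrictGt ge z y

/-- `ρ` is a rank function for the `≥`-relation `ge`. -/
def IsRankFn {α : Sort*} (ge : α → α → Prop) (ρ : α → ℕ) : Prop :=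
  (∀ x y, StrictGt ge x y → ρ y < ρ x) ∧
  (∀ x y, Covers ge x y → ρ x = ρ y + 1)


/-!
Every stable graph of genus `g` with `n` legs contracts onto the one-vertex graph of weight `g`
with `n` legs (stable exactly when `2g - 2 + n > 0`): the weight of the vertex is the genus of
the whole graph. The empty edge set is cyclic and every contraction pushes it to the empty set,
so `(point, ∅)` lies below every object of `C_{g,n}`, which makes the poset connected, and
any contraction `G → G'` lifts to `(G, ∅) ≥ (G', ∅)`.
-/

theorem Relation.eqvGen_symmClosure_of_forall_rel {α : Type*} {r : α → α → Prop} (m : α)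
    (hm : ∀ a, r a m) (a b : α) : Relation.EqvGen (fun x y => r x y ∨ r y x) a b :=
  .trans a m b (.rel a m (.inl (hm a))) (.rel m b (.inr (hm b)))

namespace WLGraph

theorem isCyclic_empty (G : WLGraph) : G.IsCyclic ∅ := by
  have hzero : G.indicator ∅ = 0 := by funext e; simp [indicator]
  rw [IsCyclic, hzero, map_zero]

theorem Connected.numComp_eq_one {G : WLGraph} (hG : G.Connected) : G.numComp = 1 := by
  refine Nat.card_eq_one_iff_unique.mpr ⟨⟨fun a b => ?_⟩, inferInstance⟩
  induction a using Quot.ind with | _ u =>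
  induction b using Quot.ind with | _ v =>
  exact Quot.eqvGen_sound (hG u v)

theorem Connected.genus_eq {G : WLGraph} (hG : G.Connected) :
    G.genus = (∑ v, G.w v) + (Fintype.card G.E + 1 - Fintype.card G.V) := by
  rw [genus, b1, hG.numComp_eq_one]

def point (g n : ℕ) : WLGraph where
  V := Unit
  E := Empty
  Lg := Fin n
  fV := inferInstance
  fE := inferInstance
  fL := inferInstance
  dV := inferInstance
  dE := inferInstance
  dL := inferInstance
  neV := inferInstance
  ends := Empty.elim
  legEnd := fun _ => ()
  w := fun _ => g

instance (g n : ℕ) : Unique (point g n).V := inferInstanceAs (Unique Unit)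

instance (g n : ℕ) : IsEmpty (point g n).E := inferInstanceAs (IsEmpty Empty)

theorem point_connected (g n : ℕ) : (point g n).Connected := fun _ _ => .refl _

theorem point_deg (g n : ℕ) (v : (point g n).V) : (point g n).deg v = 0 :=
  Finset.sum_of_isEmpty _

theorem point_legsAt (g n : ℕ) (v : (point g n).V) : (point g n).legsAt v = n := by
  rw [legsAt, Finset.filter_eq_self.mpr fun _ _ => Subsingleton.elim _ _]
  exact Finset.card_fin n

theorem point_genus (g n : ℕ) : (point g n).genus = g := by
  rw [(point_connected g n).genus_eq]
  change (∑ _ : Unit, g) + (Fintype.card Empty + 1 - Fintype.card Unit) = g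
  simp

theorem stG_point {g n : ℕ} (h : 2 < 2 * g + n) : StG g n (point g n) := by
  refine ⟨⟨point_connected g n, fun v => ?_⟩, point_genus g n, Fintype.card_fin n⟩
  rw [point_deg, point_legsAt]
  exact h

def Connected.contractionToPoint {G : WLGraph} (hG : G.Connected) :
    Contraction G (point G.genus G.numLegs) where
  F := Finset.univ
  vMap := fun _ => default
  eEquiv := @Equiv.equivOfIsEmpty _ _ _ ⟨fun e => e.2 (Finset.mem_univ _)⟩
  lEquiv := (Fintype.equivFin G.Lg).symm
  vSurj := fun _ => ⟨Classical.arbitrary G.V, Subsingleton.elim _ _⟩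
  ends_compat := isEmptyElim
  leg_compat := fun _ => rfl
  collapse := fun _ _ _ _ _ _ => rfl
  fiber_conn := fun u v _ => hG u v
  w_compat := fun v' => by
    rw [Finset.filter_eq_self.mpr fun _ _ => Subsingleton.elim _ _,
      Finset.filter_eq_self.mpr fun _ _ _ _ => Subsingleton.elim _ _,
      Finset.card_univ, Finset.card_univ]
    exact hG.genus_eq

theorem graphGe_point {g n : ℕ} {G : WLGraph} (hG : StG g n G) : GraphGe G (point g n) := by
  obtain ⟨⟨hconn, -⟩, rfl, rfl⟩ := hG
  exact ⟨hconn.contractionToPoint⟩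

end WLGraph

theorem Contraction.pushE_empty {G G' : WLGraph} (γ : Contraction G G') : γ.pushE ∅ = ∅ := by
  simp [Contraction.pushE]

theorem cycGe_of_graphGe_of_isEmpty {G G' : WLGraph} [IsEmpty G'.E] (h : GraphGe G G')
    (P : Finset G.E) : CycGe ⟨G, P⟩ ⟨G', ∅⟩ :=
  let ⟨γ⟩ := h
  ⟨γ, Finset.eq_empty_of_isEmpty _⟩

theorem cycGe_empty_of_graphGe {G G' : WLGraph} (h : GraphGe G G') :
    CycGe ⟨G, ∅⟩ ⟨G', ∅⟩ :=
  let ⟨γ⟩ := h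
  ⟨γ, γ.pushE_empty⟩

/-- Assume `2g − 2 + n > 0`.  The poset `C_{g,n}` of pairs
`(G,P)` with `G` a stable graph of genus `g` with `n` legs and `P ∈ C_G` is
connected, and the forgetful map `C_{g,n} → S_{g,n}`, `(G,P) ↦ G`, is a
quotient of posets. -/
theorem cyc_poset_connected_and_forgetful_quotient (g n : ℕ)
    (h : 2 < 2 * g + n) :
    (∀ a b : {x : CycObj // StG g n x.1 ∧ x.1.IsCyclic x.2},
      Relation.EqvGen
        (fun x y : {x : CycObj // StG g n x.1 ∧ x.1.IsCyclic x.2} =>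
          CycGe x.1 y.1 ∨ CycGe y.1 x.1) a b) ∧
    IsPosetQuotient
      (fun x y : {x : CycObj // StG g n x.1 ∧ x.1.IsCyclic x.2} =>
        CycGe x.1 y.1)
      (fun X Y : {H : WLGraph // StG g n H} => GraphGe X.1 Y.1)
      (fun x => ⟨x.1.1, x.2.1⟩) := by
  let withEmpty (X : {H : WLGraph // StG g n H}) :
      {x : CycObj // StG g n x.1 ∧ x.1.IsCyclic x.2} :=
    ⟨⟨X.1, ∅⟩, X.2, X.1.isCyclic_empty⟩
  refine ⟨?connected, fun X => ⟨withEmpty X, rfl⟩, ?monotone, ?lift⟩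
  case connected =>
    exact Relation.eqvGen_symmClosure_of_forall_rel (withEmpty ⟨_, WLGraph.stG_point h⟩)
      fun a => cycGe_of_graphGe_of_isEmpty (WLGraph.graphGe_point a.2.1) a.1.2
  case monotone =>
    rintro a a' ⟨γ, -⟩
    exact ⟨γ⟩
  case lift =>
    intro X Y hXY
    exact ⟨withEmpty X, withEmpty Y, rfl, rfl, cycGe_empty_of_graphGe hXY⟩

end
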